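/- Let γ1, γ2, n be positive integers with γ1 < γ2 and n ≥ 3γ2 + 1. Then α(T_{3γ1−2}) > α(T_{3γ2−2}), where both trees have order n. -/

import Mathlib

/-!
Moving a pendant vertex at an end of the path into the path strictly decreases the algebraic
connectivity: `α(T(k, l, d + 2)) < α(T(k + 1, l, d + 1))`. Let `x` be a unit Fiedler vector of
`T(k + 1, l, d + 1)`. An explicit test vector gives `α < 1`, so the eigenvalue equations at the
`k + 1` pendant vertices of `v₁` force `x` to take one value `p` on all of them, and `p ≠ x(v₁)`,
since otherwise the eigenvalue equations propagate `x = 0` along the path. Making one of these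
pendant vertices the new first path vertex and re-attaching the other `k` to it, with all values
kept, gives a unit vector of zero sum on `T(k, l, d + 2)` with Rayleigh quotient
`α - k (p - x(v₁))²`. Applying this at both ends carries `T_{3γ₂-2}` to `T_{3γ₁-2}`; for `γ₁ = 1`
the smaller tree is a star, whose algebraic connectivity is at least `1`.
-/

/-- The algebraic connectivity of a graph: the second smallest Laplacian eigenvalue,
realized as the minimum of the Rayleigh quotient over unit vectors orthogonal to the
all-ones vector. -/
noncomputable def algConn {V : Type*} [Fintype V] [DecidableEq V] (G : SimpleGraph V) : ℝ :=
  letI := Classical.decRel G.Adj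
  sInf { r : ℝ | ∃ x : V → ℝ, (∑ v, x v) = 0 ∧ (∑ v, (x v) ^ 2) = 1 ∧
      r = dotProduct x ((G.lapMatrix ℝ).mulVec x) }

/-- A Fiedler vector: an eigenvector of the Laplacian matrix for the eigenvalue `algConn G`. -/
noncomputable def IsFiedlerVector {V : Type*} [Fintype V] [DecidableEq V]
    (G : SimpleGraph V) (x : V → ℝ) : Prop :=
  letI := Classical.decRel G.Adj
  x ≠ 0 ∧ (G.lapMatrix ℝ).mulVec x = algConn G • x

/-- The domination number: the minimum size of a set `S` of vertices such that every
vertex outside `S` has a neighbor in `S`. -/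
noncomputable def dominationNumber {V : Type*} [Fintype V] (G : SimpleGraph V) : ℕ :=
  sInf { k : ℕ | ∃ S : Finset V, S.card = k ∧ ∀ v ∉ S, ∃ u ∈ S, G.Adj u v }

/-- The tree `T(k,l,d)`: a path on `d` vertices `0, …, d-1` with `k` pendant vertices
attached at vertex `0` and `l` pendant vertices attached at vertex `d-1`. -/
def Tkld (k l d : ℕ) : SimpleGraph (Fin k ⊕ Fin d ⊕ Fin l) where
  Adj a b :=
    match a, b with
    | Sum.inl _, Sum.inr (Sum.inl j) => j.1 = 0
    | Sum.inr (Sum.inl j), Sum.inl _ => j.1 = 0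
    | Sum.inr (Sum.inl i), Sum.inr (Sum.inl j) => i.1 + 1 = j.1 ∨ j.1 + 1 = i.1
    | Sum.inr (Sum.inl j), Sum.inr (Sum.inr _) => j.1 + 1 = d
    | Sum.inr (Sum.inr _), Sum.inr (Sum.inl j) => j.1 + 1 = d
    | _, _ => False
  symm := by
    constructor
    rintro (a | b | c) (a' | b' | c') h <;> simp_all <;> tauto
  loopless := by
    constructor
    rintro (a | b | c) h <;> simp_all

/-- The coalescence `G₁(v) ◇ G₂(u)`: identify the vertex `v` of `G₁` with the vertex `u`
of `G₂` (the identified vertex is represented by `Sum.inl v`). -/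
def coalesce {V₁ V₂ : Type*} (G₁ : SimpleGraph V₁) (G₂ : SimpleGraph V₂)
    (v : V₁) (u : V₂) : SimpleGraph (V₁ ⊕ {w : V₂ // w ≠ u}) where
  Adj a b :=
    match a, b with
    | Sum.inl a, Sum.inl b => G₁.Adj a b
    | Sum.inl a, Sum.inr b => a = v ∧ G₂.Adj u b.1
    | Sum.inr a, Sum.inl b => b = v ∧ G₂.Adj u a.1
    | Sum.inr a, Sum.inr b => G₂.Adj a.1 b.1
  symm := by
    constructor
    rintro (a | a) (b | b) h <;> simp_all [SimpleGraph.adj_comm]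
  loopless := by
    constructor
    rintro (a | a) h <;> simp_all

open Finset Matrix

theorem LinearMap.IsSymmetric.exists_eigenvector_forall_le_inner {E : Type*}
    [NormedAddCommGroup E] [InnerProductSpace ℝ E] [FiniteDimensional ℝ E] {T : E →ₗ[ℝ] E}
    (hT : T.IsSymmetric) {W : Submodule ℝ E} (hW : ∀ w ∈ W, T w ∈ W) (hW0 : W ≠ ⊥) :
    ∃ μ : ℝ, ∃ u ∈ W, ‖u‖ = 1 ∧ T u = μ • u ∧ ∀ w ∈ W, μ * ‖w‖ ^ 2 ≤ inner ℝ (T w) w := by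
  have : Nontrivial W := Submodule.nontrivial_iff_ne_bot.mpr hW0
  set S := T.restrict hW
  set μ : ℝ := ⨅ x : {x : W // x ≠ 0}, RCLike.re (inner ℝ (S x) (x : W)) / ‖(x : W)‖ ^ 2
  obtain ⟨v, hv⟩ :=
    (hT.restrict_invariant hW).hasEigenvalue_iInf_of_finiteDimensional.exists_hasEigenvector
  have hv0 : (v : E) ≠ 0 := by simpa using hv.2
  have hTv : T v = μ • (v : E) := congrArg Subtype.val hv.apply_eq_smul
  refine ⟨μ, ‖(v : E)‖⁻¹ • (v : E), W.smul_mem _ v.2, norm_smul_inv_norm hv0, ?_, fun w hw => ?_⟩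
  · rw [map_smul, hTv, smul_comm]
  rcases eq_or_ne w 0 with rfl | hw0
  · simp
  have hbdd : BddBelow (Set.range fun x : {x : W // x ≠ 0} =>
      RCLike.re (inner ℝ (S x) (x : W)) / ‖(x : W)‖ ^ 2) := by
    refine ⟨-‖LinearMap.toContinuousLinearMap S‖, ?_⟩
    rintro _ ⟨x, rfl⟩
    exact neg_le_of_abs_le ((LinearMap.toContinuousLinearMap S).rayleighQuotient_le_norm x)
  have h : μ ≤ inner ℝ (T w) w / ‖w‖ ^ 2 :=
    ciInf_le hbdd ⟨⟨w, hw⟩, by simpa using hw0⟩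
  rwa [le_div_iff₀ (by positivity)] at h

/-- `algConn` uses the classical decidability instance for adjacency; making it the ambient one
keeps every Laplacian below syntactically equal to the one inside `algConn`. -/
noncomputable local instance decRelAdj {W : Type*} (G : SimpleGraph W) : DecidableRel G.Adj :=
  Classical.decRel G.Adj

namespace SimpleGraph

variable {V : Type*} [Fintype V] [DecidableEq V] (G : SimpleGraph V)

lemma dotProduct_lapMatrix_mulVec_nonneg (x : V → ℝ) : 0 ≤ x ⬝ᵥ (G.lapMatrix ℝ *ᵥ x) := by
  simpa using (G.posSemidef_lapMatrix ℝ).dotProduct_mulVec_nonneg x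

lemma dotProduct_lapMatrix_mulVec_eq_sum_adj (x : V → ℝ) :
    x ⬝ᵥ (G.lapMatrix ℝ *ᵥ x) = (∑ a, ∑ b, if G.Adj a b then (x a - x b) ^ 2 else 0) / 2 := by
  rw [← toLinearMap₂'_apply', lapMatrix_toLinearMap₂' (R := ℝ)]

theorem dotProduct_lapMatrix_mulVec_eq_sum_parent (p : V → Option V)
    (hadj : ∀ a b, G.Adj a b ↔ p a = some b ∨ p b = some a)
    (hp : ∀ a b, p a = some b → p b ≠ some a) (x : V → ℝ) :
    x ⬝ᵥ (G.lapMatrix ℝ *ᵥ x) = ∑ a, (p a).elim 0 fun b => (x a - x b) ^ 2 := by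
  have hsplit : ∀ a b, (if G.Adj a b then (x a - x b) ^ 2 else 0) =
      (if p a = some b then (x a - x b) ^ 2 else 0) +
        (if p b = some a then (x b - x a) ^ 2 else 0) := by
    intro a b
    by_cases h₁ : p a = some b
    · simp [hadj, h₁, hp a b h₁]
    · by_cases h₂ : p b = some a <;> simp [hadj, h₁, h₂, sub_sq_comm]
  have hsum : ∀ a, (∑ b, if p a = some b then (x a - x b) ^ 2 else 0) =
      (p a).elim 0 fun b => (x a - x b) ^ 2 := by
    intro a
    cases p a <;> simp
  rw [dotProduct_lapMatrix_mulVec_eq_sum_adj]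
  simp_rw [hsplit, sum_add_distrib]
  rw [sum_comm (f := fun a b => if p b = some a then (x b - x a) ^ 2 else 0)]
  simp_rw [hsum]
  ring

lemma dotProduct_lapMatrix_mulVec_comp_iso {W : Type*} [Fintype W] [DecidableEq W]
    {H : SimpleGraph W} (e : G ≃g H) (x : W → ℝ) :
    (x ∘ e) ⬝ᵥ (G.lapMatrix ℝ *ᵥ (x ∘ e)) = x ⬝ᵥ (H.lapMatrix ℝ *ᵥ x) := by
  simp only [dotProduct_lapMatrix_mulVec_eq_sum_adj]
  rw [← e.toEquiv.sum_comp]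
  simp_rw [← e.toEquiv.sum_comp (fun b => if H.Adj _ b then _ else _)]
  simp [e.map_adj_iff]

lemma dotProduct_lapMatrix_mulVec_of_eq_smul {x : V → ℝ} {μ : ℝ}
    (hx : G.lapMatrix ℝ *ᵥ x = μ • x) (hn : ∑ v, x v ^ 2 = 1) :
    x ⬝ᵥ (G.lapMatrix ℝ *ᵥ x) = μ := by
  rw [hx, dotProduct_smul, smul_eq_mul]
  simp [dotProduct, ← sq, hn]

lemma lapMatrix_mulVec_apply_of_neighborFinset_eq_singleton {v w : V}
    (h : G.neighborFinset v = {w}) (x : V → ℝ) : (G.lapMatrix ℝ *ᵥ x) v = x v - x w := by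
  rw [G.lapMatrix_mulVec_apply, ← G.card_neighborFinset_eq_degree, h]
  simp

lemma eq_zero_of_lapMatrix_mulVec_eq_smul {x : V → ℝ} {μ : ℝ} (hx : G.lapMatrix ℝ *ᵥ x = μ • x)
    {v w : V} (hvw : G.Adj v w) (hv : x v = 0) (hN : ∀ u, G.Adj v u → u ≠ w → x u = 0) :
    x w = 0 := by
  have h := congrFun hx v
  rw [G.lapMatrix_mulVec_apply, sum_eq_single w (fun u hu huw => hN u (by simpa using hu) huw)
    (fun hw => absurd (by simpa using hvw) hw)] at h
  simpa [hv] using h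

theorem exists_lapMatrix_eigenvector_forall_le (hV : 1 < Fintype.card V) :
    ∃ μ : ℝ, ∃ x : V → ℝ, ∑ v, x v = 0 ∧ ∑ v, x v ^ 2 = 1 ∧ G.lapMatrix ℝ *ᵥ x = μ • x ∧
      ∀ y : V → ℝ, ∑ v, y v = 0 → μ * ∑ v, y v ^ 2 ≤ y ⬝ᵥ (G.lapMatrix ℝ *ᵥ y) := by
  set T := toEuclideanLin (G.lapMatrix ℝ)
  set one : EuclideanSpace ℝ V := WithLp.toLp 2 fun _ => 1
  have hT : T.IsSymmetric := isSymmetric_toEuclideanLin_iff.2 (G.isHermitian_lapMatrix ℝ)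
  have hmem (w : EuclideanSpace ℝ V) : w ∈ (ℝ ∙ one)ᗮ ↔ ∑ v, w v = 0 := by
    simp [Submodule.mem_orthogonal_singleton_iff_inner_right,
      EuclideanSpace.inner_eq_star_dotProduct, one, dotProduct]
  have hW : ∀ w ∈ (ℝ ∙ one)ᗮ, T w ∈ (ℝ ∙ one)ᗮ := by
    intro w hw
    rw [Submodule.mem_orthogonal_singleton_iff_inner_right] at hw ⊢
    rw [← hT, show T one = 0 by ext; simp [T, one, G.lapMatrix_mulVec_const_eq_zero],
      inner_zero_left]
  have hW0 : (ℝ ∙ one)ᗮ ≠ ⊥ := by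
    rw [Ne, Submodule.orthogonal_eq_bot_iff]
    intro htop
    have : Nonempty V := Fintype.card_pos_iff.mp (by omega)
    have := finrank_span_singleton (K := ℝ) (v := one) (by simp [one, funext_iff])
    rw [htop, finrank_top, finrank_euclideanSpace] at this
    omega
  obtain ⟨μ, u, hu, hu1, hTu, hmin⟩ := hT.exists_eigenvector_forall_le_inner hW hW0
  refine ⟨μ, WithLp.ofLp u, (hmem u).1 hu, by rw [← EuclideanSpace.real_norm_sq_eq, hu1, one_pow],
    congrArg WithLp.ofLp hTu, fun y hy => ?_⟩
  simpa [EuclideanSpace.real_norm_sq_eq, EuclideanSpace.inner_eq_star_dotProduct, T]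
    using hmin (WithLp.toLp 2 y) ((hmem _).2 hy)

end SimpleGraph

section AlgConn

variable {V : Type*} [Fintype V] [DecidableEq V] (G : SimpleGraph V)

lemma algConn_le {x : V → ℝ} (hs : ∑ v, x v = 0) (hn : ∑ v, x v ^ 2 = 1) :
    algConn G ≤ x ⬝ᵥ (G.lapMatrix ℝ *ᵥ x) :=
  csInf_le ⟨0, fun _ ⟨y, _, _, hy⟩ => hy ▸ G.dotProduct_lapMatrix_mulVec_nonneg y⟩ ⟨x, hs, hn, rfl⟩

lemma algConn_eq_of_forall_le {μ : ℝ} {x : V → ℝ} (hs : ∑ v, x v = 0) (hn : ∑ v, x v ^ 2 = 1)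
    (hx : G.lapMatrix ℝ *ᵥ x = μ • x)
    (hmin : ∀ y : V → ℝ, ∑ v, y v = 0 → μ * ∑ v, y v ^ 2 ≤ y ⬝ᵥ (G.lapMatrix ℝ *ᵥ y)) :
    algConn G = μ := by
  have hQ := G.dotProduct_lapMatrix_mulVec_of_eq_smul hx hn
  refine le_antisymm (hQ ▸ algConn_le G hs hn) (le_csInf ⟨μ, x, hs, hn, hQ.symm⟩ ?_)
  rintro _ ⟨y, hys, hyn, rfl⟩
  simpa [hyn] using hmin y hys

theorem exists_lapMatrix_mulVec_eq_algConn_smul (hV : 1 < Fintype.card V) :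
    ∃ x : V → ℝ, ∑ v, x v = 0 ∧ ∑ v, x v ^ 2 = 1 ∧ G.lapMatrix ℝ *ᵥ x = algConn G • x := by
  obtain ⟨μ, x, hs, hn, hx, hmin⟩ := G.exists_lapMatrix_eigenvector_forall_le hV
  exact ⟨x, hs, hn, algConn_eq_of_forall_le G hs hn hx hmin ▸ hx⟩

lemma algConn_mul_sum_sq_le (hV : 1 < Fintype.card V) {y : V → ℝ} (hy : ∑ v, y v = 0) :
    algConn G * ∑ v, y v ^ 2 ≤ y ⬝ᵥ (G.lapMatrix ℝ *ᵥ y) := by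
  obtain ⟨μ, x, hs, hn, hx, hmin⟩ := G.exists_lapMatrix_eigenvector_forall_le hV
  exact algConn_eq_of_forall_le G hs hn hx hmin ▸ hmin y hy

lemma le_algConn {c : ℝ} (hV : 1 < Fintype.card V)
    (h : ∀ x : V → ℝ, ∑ v, x v = 0 → ∑ v, x v ^ 2 = 1 → c ≤ x ⬝ᵥ (G.lapMatrix ℝ *ᵥ x)) :
    c ≤ algConn G := by
  obtain ⟨x, hs, hn, hx⟩ := exists_lapMatrix_mulVec_eq_algConn_smul G hV
  simpa [G.dotProduct_lapMatrix_mulVec_of_eq_smul hx hn] using h x hs hn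

theorem algConn_pos (hV : 1 < Fintype.card V) (hG : G.Preconnected) : 0 < algConn G := by
  obtain ⟨x, hs, hn, hx⟩ := exists_lapMatrix_mulVec_eq_algConn_smul G hV
  have hα := G.dotProduct_lapMatrix_mulVec_of_eq_smul hx hn
  refine (hα ▸ G.dotProduct_lapMatrix_mulVec_nonneg x).lt_of_ne fun h0 => ?_
  rw [← h0, zero_smul, G.lapMatrix_mulVec_eq_zero_iff_forall_reachable] at hx
  obtain ⟨v⟩ : Nonempty V := Fintype.card_pos_iff.mp (by omega)
  have hconst : ∀ u, x u = x v := fun u => hx u v (hG u v)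
  simp only [hconst, sum_const, card_univ, nsmul_eq_mul] at hs hn
  have hv : x v = 0 := (mul_eq_zero.mp hs).resolve_left (by positivity)
  simp [hv] at hn

theorem algConn_congr {W : Type*} [Fintype W] [DecidableEq W] {H : SimpleGraph W}
    (e : G ≃g H) : algConn G = algConn H := by
  unfold algConn
  congr 1
  ext r
  constructor
  · rintro ⟨x, hs, hn, rfl⟩
    refine ⟨x ∘ e.symm, ?_, ?_, (H.dotProduct_lapMatrix_mulVec_comp_iso e.symm x).symm⟩
    · exact (e.symm.toEquiv.sum_comp x).trans hs
    · exact (e.symm.toEquiv.sum_comp (x · ^ 2)).trans hn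
  · rintro ⟨x, hs, hn, rfl⟩
    refine ⟨x ∘ e, ?_, ?_, (G.dotProduct_lapMatrix_mulVec_comp_iso e x).symm⟩
    · exact (e.toEquiv.sum_comp x).trans hs
    · exact (e.toEquiv.sum_comp (x · ^ 2)).trans hn

end AlgConn

namespace Tkld

open Sum

variable {k l d m : ℕ}

def parent (k l d : ℕ) : Fin k ⊕ Fin (d + 1) ⊕ Fin l → Option (Fin k ⊕ Fin (d + 1) ⊕ Fin l)
  | inl _ => some (inr (inl 0))
  | inr (inl j) => if h : j.1 < d then some (inr (inl ⟨j.1 + 1, by omega⟩)) else none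
  | inr (inr _) => some (inr (inl (Fin.last d)))

lemma adj_iff (a b : Fin k ⊕ Fin (d + 1) ⊕ Fin l) :
    (Tkld k l (d + 1)).Adj a b ↔ parent k l d a = some b ∨ parent k l d b = some a := by
  rcases a with i | j | r <;> rcases b with i' | j' | r' <;>
    simp [Tkld, parent, Fin.ext_iff, -Fin.val_eq_zero_iff]
  all_goals omega

lemma parent_ne_some_of_parent_eq_some {a b : Fin k ⊕ Fin (d + 1) ⊕ Fin l}
    (h : parent k l d a = some b) : parent k l d b ≠ some a := by
  rcases a with i | j | r <;> rcases b with i' | j' | r' <;> simp [parent, Fin.ext_iff] at h ⊢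
  all_goals omega

lemma dotProduct_lapMatrix_mulVec (x : Fin k ⊕ Fin (d + 1) ⊕ Fin l → ℝ) :
    x ⬝ᵥ ((Tkld k l (d + 1)).lapMatrix ℝ *ᵥ x) =
      ∑ i, (x (inl i) - x (inr (inl 0))) ^ 2 +
      ∑ j : Fin d, (x (inr (inl j.castSucc)) - x (inr (inl j.succ))) ^ 2 +
      ∑ r, (x (inr (inr r)) - x (inr (inl (Fin.last d)))) ^ 2 := by
  rw [SimpleGraph.dotProduct_lapMatrix_mulVec_eq_sum_parent _ _ adj_iff
    (fun _ _ => parent_ne_some_of_parent_eq_some)]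
  simp [Fintype.sum_sum_type, Fin.sum_univ_castSucc, parent, Fin.succ, add_assoc]

lemma neighborFinset_inl (i : Fin k) :
    (Tkld k l (d + 1)).neighborFinset (inl i) = {inr (inl 0)} := by
  ext b
  rcases b with i' | j | r <;> simp only [SimpleGraph.mem_neighborFinset, mem_singleton] <;>
    simp [Tkld]

lemma neighborFinset_inr_inr (r : Fin l) :
    (Tkld k l (d + 1)).neighborFinset (inr (inr r)) = {inr (inl (Fin.last d))} := by
  ext b
  rcases b with i | j | r' <;> simp only [SimpleGraph.mem_neighborFinset, mem_singleton] <;>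
    simp [Tkld, Fin.ext_iff, -Fin.val_eq_zero_iff]

lemma preconnected : (Tkld k l (d + 1)).Preconnected := by
  have hpath (j : Fin (d + 1)) : (Tkld k l (d + 1)).Reachable (inr (inl 0)) (inr (inl j)) := by
    induction j using Fin.induction with
    | zero => rfl
    | succ j ih => exact ih.trans (SimpleGraph.Adj.reachable (by simp [Tkld]))
  have hroot : ∀ a, (Tkld k l (d + 1)).Reachable (inr (inl 0)) a := by
    rintro (i | j | r)
    · exact SimpleGraph.Adj.reachable (by simp [Tkld])
    · exact hpath j
    · exact (hpath (Fin.last d)).trans (SimpleGraph.Adj.reachable (by simp [Tkld]))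
  exact fun a b => (hroot a).symm.trans (hroot b)

lemma eq_zero_of_lapMatrix_mulVec_eq_smul {x : Fin k ⊕ Fin (d + 1) ⊕ Fin l → ℝ} {μ : ℝ}
    (hμ : μ ≠ 1) (hx : (Tkld k l (d + 1)).lapMatrix ℝ *ᵥ x = μ • x)
    (hL : ∀ i, x (inl i) = 0) (h0 : x (inr (inl 0)) = 0) : x = 0 := by
  have hpath : ∀ m, ∀ j : Fin (d + 1), j.1 ≤ m → x (inr (inl j)) = 0 := by
    intro m
    induction m with
    | zero =>
      intro j hj
      rwa [show j = 0 from Fin.ext (Nat.le_zero.mp hj)]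
    | succ m ih =>
      intro j hj
      rcases hj.lt_or_eq with hj | hj
      · exact ih j (by omega)
      refine SimpleGraph.eq_zero_of_lapMatrix_mulVec_eq_smul _ hx
        (v := inr (inl ⟨m, by omega⟩)) (by simp only [Tkld]; omega) (ih _ le_rfl) ?_
      rintro (i | j' | r) hadj hne
      · exact hL i
      · have hne' : j'.1 ≠ j.1 := fun h => hne (by rw [Fin.ext h])
        simp only [Tkld] at hadj
        exact ih j' (by omega)
      · simp only [Tkld] at hadj
        omega
  have hR (r : Fin l) : x (inr (inr r)) = 0 := by
    have h := congrFun hx (inr (inr r))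
    rw [SimpleGraph.lapMatrix_mulVec_apply_of_neighborFinset_eq_singleton _
      (neighborFinset_inr_inr r), hpath d _ (Fin.is_le _)] at h
    simp only [sub_zero, Pi.smul_apply, smul_eq_mul] at h
    have : (1 - μ) * x (inr (inr r)) = 0 := by linarith
    exact (mul_eq_zero.mp this).resolve_left (sub_ne_zero.mpr hμ.symm)
  funext a
  rcases a with i | j | r
  · exact hL i
  · exact hpath d j (Fin.is_le _)
  · exact hR r

def swap (k l d : ℕ) : Tkld k l d ≃g Tkld l k d where
  toFun := Sum.elim (inr ∘ inr) (Sum.elim (inr ∘ inl ∘ Fin.rev) inl)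
  invFun := Sum.elim (inr ∘ inr) (Sum.elim (inr ∘ inl ∘ Fin.rev) inl)
  left_inv := by rintro (i | j | r) <;> simp
  right_inv := by rintro (i | j | r) <;> simp
  map_rel_iff' := by
    rintro (i | j | r) (i' | j' | r') <;> simp [Tkld] <;> omega

lemma algConn_lt_one (hk : 2 ≤ k) (hl : 1 ≤ l) (hm : 2 ≤ m) : algConn (Tkld k l m) < 1 := by
  obtain ⟨d, rfl⟩ : ∃ d, m = d + 2 := ⟨m - 2, by omega⟩
  set a : ℝ := k + 1
  set b : ℝ := d + 1 + l
  have ha : 3 ≤ a := by simp only [a]; norm_cast; omega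
  have hb : 2 ≤ b := by simp only [b]; norm_cast; omega
  -- constant on the two sides (of sizes `a` and `b`) of the edge between path vertices `0` and `1`
  set z : Fin k ⊕ Fin (d + 2) ⊕ Fin l → ℝ :=
    Sum.elim (fun _ => b) (Sum.elim (Fin.cons b fun _ => -a) fun _ => -a)
  have hsum : ∑ v, z v = 0 := by
    simp [z, Fintype.sum_sum_type, Fin.sum_univ_succ, a, b]
    ring
  have hsq : ∑ v, z v ^ 2 = a * b * (a + b) := by
    simp [z, Fintype.sum_sum_type, Fin.sum_univ_succ, a, b]
    ring
  have hQ : z ⬝ᵥ ((Tkld k l (d + 2)).lapMatrix ℝ *ᵥ z) = (a + b) ^ 2 := by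
    rw [dotProduct_lapMatrix_mulVec]
    simp [z, Fin.sum_univ_succ, ← Fin.succ_last]
    ring
  have h := algConn_mul_sum_sq_le (Tkld k l (d + 2)) (by simp; omega) hsum
  rw [hsq, hQ] at h
  have hab : a + b < a * b := by nlinarith
  have hlt : (a + b) ^ 2 < 1 * (a * b * (a + b)) := by
    rw [one_mul, sq]
    exact mul_lt_mul_of_pos_right hab (by positivity)
  exact lt_of_mul_lt_mul_right (h.trans_lt hlt) (by positivity)

lemma one_le_algConn_star (hkl : 1 ≤ k + l) : 1 ≤ algConn (Tkld k l 1) := by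
  refine le_algConn _ (by simp; omega) fun x hs hn => ?_
  set c := x (inr (inl 0))
  have hQ : x ⬝ᵥ ((Tkld k l 1).lapMatrix ℝ *ᵥ x) = ∑ v, (x v - c) ^ 2 := by
    rw [dotProduct_lapMatrix_mulVec]
    simp [Fintype.sum_sum_type, c]
  have hexp : ∑ v, (x v - c) ^ 2 = 1 + Fintype.card (Fin k ⊕ Fin 1 ⊕ Fin l) * c ^ 2 := by
    simp only [sub_sq, sum_add_distrib, sum_sub_distrib, ← sum_mul, ← mul_sum, hs, hn, sum_const,
      card_univ, nsmul_eq_mul]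
    ring
  rw [hQ, hexp]
  have : 0 ≤ (Fintype.card (Fin k ⊕ Fin 1 ⊕ Fin l) : ℝ) * c ^ 2 := by positivity
  linarith

/-- Turns the pendant vertex `inl 0` of `T(k + 1, l, d + 1)` into the new first path vertex and
re-attaches the other `k` pendant vertices to it, keeping all values. -/
def extendPath (x : Fin (k + 1) ⊕ Fin (d + 1) ⊕ Fin l → ℝ) : Fin k ⊕ Fin (d + 2) ⊕ Fin l → ℝ :=
  Sum.elim (fun _ => x (inl 0))
    (Sum.elim (Fin.cons (x (inl 0)) fun j => x (inr (inl j))) fun r => x (inr (inr r)))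

lemma sum_comp_extendPath {x : Fin (k + 1) ⊕ Fin (d + 1) ⊕ Fin l → ℝ}
    (hx : ∀ i, x (inl i) = x (inl 0)) (f : ℝ → ℝ) :
    ∑ v, f (extendPath x v) = ∑ v, f (x v) := by
  simp [extendPath, Fintype.sum_sum_type, Fin.sum_univ_succ (n := d + 1),
    Fin.sum_univ_succ (n := k), hx]
  ring

lemma dotProduct_extendPath {x : Fin (k + 1) ⊕ Fin (d + 1) ⊕ Fin l → ℝ}
    (hx : ∀ i, x (inl i) = x (inl 0)) :
    extendPath x ⬝ᵥ ((Tkld k l (d + 2)).lapMatrix ℝ *ᵥ extendPath x) +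
        k * (x (inl 0) - x (inr (inl 0))) ^ 2 =
      x ⬝ᵥ ((Tkld (k + 1) l (d + 1)).lapMatrix ℝ *ᵥ x) := by
  rw [dotProduct_lapMatrix_mulVec, dotProduct_lapMatrix_mulVec]
  simp [extendPath, Fin.sum_univ_succ (n := d), Fin.sum_univ_succ (n := k), ← Fin.succ_last, hx]
  ring

theorem algConn_succ_lt_left (hk : 1 ≤ k) (hl : 1 ≤ l) (hm : 2 ≤ m) :
    algConn (Tkld k l (m + 1)) < algConn (Tkld (k + 1) l m) := by
  obtain ⟨d, rfl⟩ : ∃ d, m = d + 1 := ⟨m - 1, by omega⟩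
  have hV : 1 < Fintype.card (Fin (k + 1) ⊕ Fin (d + 1) ⊕ Fin l) := by simp; omega
  obtain ⟨x, hs, hn, hx⟩ := exists_lapMatrix_mulVec_eq_algConn_smul _ hV
  set α := algConn (Tkld (k + 1) l (d + 1))
  have hα0 : 0 < α := algConn_pos _ hV preconnected
  have hα1 : α < 1 := algConn_lt_one (by omega) hl hm
  have hleaf (i : Fin (k + 1)) : α * x (inl i) = x (inl i) - x (inr (inl 0)) := by
    rw [← SimpleGraph.lapMatrix_mulVec_apply_of_neighborFinset_eq_singleton _
      (neighborFinset_inl i), hx, Pi.smul_apply, smul_eq_mul]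
  have hconst (i : Fin (k + 1)) : x (inl i) = x (inl 0) := by
    refine mul_left_cancel₀ (sub_ne_zero.mpr hα1.ne') ?_
    linarith [hleaf i, hleaf 0]
  have hgap : x (inl 0) ≠ x (inr (inl 0)) := by
    intro h
    have hp : x (inl 0) = 0 := by simpa [hα0.ne', h] using hleaf 0
    have := eq_zero_of_lapMatrix_mulVec_eq_smul hα1.ne hx (fun i => (hconst i).trans hp) (h ▸ hp)
    simp [this] at hn
  have hQ := dotProduct_extendPath hconst
  rw [SimpleGraph.dotProduct_lapMatrix_mulVec_of_eq_smul _ hx hn] at hQ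
  have hdrop : 0 < (k : ℝ) * (x (inl 0) - x (inr (inl 0))) ^ 2 :=
    mul_pos (Nat.cast_pos.mpr hk) (by positivity [sub_ne_zero.mpr hgap])
  calc algConn (Tkld k l (d + 2))
      ≤ extendPath x ⬝ᵥ ((Tkld k l (d + 2)).lapMatrix ℝ *ᵥ extendPath x) :=
        algConn_le _ (by simpa using (sum_comp_extendPath hconst id).trans hs)
          (by simpa using (sum_comp_extendPath hconst (· ^ 2)).trans hn)
    _ < α := by linarith

theorem algConn_add_lt_left (hk : 1 ≤ k) (hl : 1 ≤ l) (hm : 2 ≤ m) {a : ℕ} (ha : 1 ≤ a) :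
    algConn (Tkld k l (m + a)) < algConn (Tkld (k + a) l m) := by
  induction a, ha using Nat.le_induction generalizing k with
  | base => exact algConn_succ_lt_left hk hl hm
  | succ a ha ih =>
    calc algConn (Tkld k l (m + a + 1))
        < algConn (Tkld (k + 1) l (m + a)) := algConn_succ_lt_left hk hl (by omega)
      _ < algConn (Tkld (k + 1 + a) l m) := ih (by omega)
      _ = algConn (Tkld (k + (a + 1)) l m) := by rw [add_right_comm, add_assoc]

theorem algConn_add_lt_right (hk : 1 ≤ k) (hl : 1 ≤ l) (hm : 2 ≤ m) {b : ℕ} (hb : 1 ≤ b) :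
    algConn (Tkld k l (m + b)) < algConn (Tkld k (l + b) m) := by
  rw [algConn_congr _ (swap k l _), algConn_congr _ (swap k (l + b) _)]
  exact algConn_add_lt_left hl hk hm hb

end Tkld

/-- for positive integers `γ₁ < γ₂` and `n ≥ 3γ₂ + 1`,
`α(T_{3γ₁−2}) > α(T_{3γ₂−2})`, where both trees have order `n`. -/
theorem algConn_Td_strict_anti (n γ₁ γ₂ : ℕ) (hγ₁ : 1 ≤ γ₁) (hγ₂ : γ₁ < γ₂)
    (hn : 3 * γ₂ + 1 ≤ n) :
    algConn (Tkld ((n - (3 * γ₁ - 2) + 1) / 2) ((n - (3 * γ₁ - 2)) / 2) (3 * γ₁ - 2)) >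
      algConn (Tkld ((n - (3 * γ₂ - 2) + 1) / 2) ((n - (3 * γ₂ - 2)) / 2) (3 * γ₂ - 2)) := by
  set k := (n - (3 * γ₂ - 2) + 1) / 2
  set l := (n - (3 * γ₂ - 2)) / 2
  obtain rfl | hγ₁ := hγ₁.eq_or_lt
  · calc algConn (Tkld k l (3 * γ₂ - 2)) < 1 := Tkld.algConn_lt_one (by omega) (by omega) (by omega)
      _ ≤ _ := Tkld.one_le_algConn_star (by omega)
  obtain ⟨a, ha⟩ := Nat.exists_eq_add_of_le (show k ≤ (n - (3 * γ₁ - 2) + 1) / 2 by omega)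
  obtain ⟨b, hb⟩ := Nat.exists_eq_add_of_le (show l ≤ (n - (3 * γ₁ - 2)) / 2 by omega)
  have hd : 3 * γ₂ - 2 = 3 * γ₁ - 2 + a + b := by omega
  rw [ha, hb, hd]
  calc algConn (Tkld k l (3 * γ₁ - 2 + a + b))
      < algConn (Tkld k (l + b) (3 * γ₁ - 2 + a)) :=
        Tkld.algConn_add_lt_right (by omega) (by omega) (by omega) (by omega)
    _ < algConn (Tkld (k + a) (l + b) (3 * γ₁ - 2)) :=
        Tkld.algConn_add_lt_left (by omega) (by omega) (by omega) (by omega)
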